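/- arXiv:2010.03906 — 2 statements merged into one kernel-verified Lean document; each statement's English description precedes it below -/
import Mathlib

section
/- Let β ∈ [0,1), F an m-dimensional subspace of ℝ^n, and u : F → F⊥ Lipschitz with Lipschitz constant at most β. If x ∈ F is a point where u is differentiable with derivative Du(x), and p = x + u(x), then the angle between the tangent plane T_p(graph u) := {v + Du(x)v : v ∈ F} and F satisfies ∠(T_p(graph u), F) ≤ ‖Du(x)‖ ≤ β. -/
open Metric Real Filter

noncomputable def pr {n : ℕ} (F : Submodule ℝ (EuclideanSpace ℝ (Fin n))) :
    EuclideanSpace ℝ (Fin n) →L[ℝ] EuclideanSpace ℝ (Fin n) :=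
  F.subtypeL.comp (F.orthogonalProjection)

noncomputable def graphSet {n : ℕ} (F : Submodule ℝ (EuclideanSpace ℝ (Fin n)))
    (u : F → Fᗮ) : Set (EuclideanSpace ℝ (Fin n)) :=
  Set.range fun z : F => (z : EuclideanSpace ℝ (Fin n)) + (u z : EuclideanSpace ℝ (Fin n))

noncomputable def cone {n : ℕ} (x : EuclideanSpace ℝ (Fin n)) (β : ℝ)
    (F : Submodule ℝ (EuclideanSpace ℝ (Fin n))) : Set (EuclideanSpace ℝ (Fin n)) :=
  {z | ‖pr Fᗮ (z - x)‖ ≤ β * ‖pr F (z - x)‖}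

/-- The tangent plane to the graph of a Lipschitz function at a point of
differentiability: the image of `F` under `v ↦ v + Du(x)v`. -/
noncomputable def tangentPlane {n : ℕ} (F : Submodule ℝ (EuclideanSpace ℝ (Fin n)))
    (Du : F →L[ℝ] Fᗮ) : Submodule ℝ (EuclideanSpace ℝ (Fin n)) :=
  LinearMap.range (F.subtype + Fᗮ.subtype ∘ₗ Du.toLinearMap)

/-!
Write `P_V` for the orthogonal projection onto `V`. Since `P_T - P_F = P_{F⊥} P_T - P_F P_{T⊥}`
and the two terms take values in `F⊥` and `F`, Pythagoras bounds `‖P_T - P_F‖` by the larger of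
the norms of `P_{F⊥}` on `T` and of `P_F` on `T⊥`; by self-adjointness the latter is at most the
norm of `P_{T⊥}` on `F`. For the graph `T` of `Du`, the point `v + Du v ∈ T` has `F⊥`-component
`Du v` with `‖v‖ ≤ ‖v + Du v‖`, and `v ∈ F` lies within `‖Du v‖` of it, so both norms are at most
`‖Du‖`. Finally `‖Du‖ ≤ β` because `u` is `β`-Lipschitz.
-/

open scoped InnerProductSpace

section Projections

variable {𝕜 E : Type*} [RCLike 𝕜] [NormedAddCommGroup E] [InnerProductSpace 𝕜 E]

theorem Submodule.norm_starProjection_le_of_norm_starProjection_le (K L : Submodule 𝕜 E)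
    [K.HasOrthogonalProjection] [L.HasOrthogonalProjection] {δ : ℝ} (hδ : 0 ≤ δ)
    (h : ∀ w ∈ K, ‖L.starProjection w‖ ≤ δ * ‖w‖) {y : E} (hy : y ∈ L) :
    ‖K.starProjection y‖ ≤ δ * ‖y‖ := by
  set w := K.starProjection y
  have hsq : ‖w‖ ^ 2 ≤ δ * ‖w‖ * ‖y‖ :=
    calc ‖w‖ ^ 2 = RCLike.re ⟪w, y⟫_𝕜 := by
          rw [K.re_inner_starProjection_eq_normSq]; rfl
      _ = RCLike.re ⟪L.starProjection w, y⟫_𝕜 := by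
          rw [L.inner_starProjection_left_eq_right, L.starProjection_eq_self_iff.mpr hy]
      _ ≤ ‖L.starProjection w‖ * ‖y‖ := re_inner_le_norm _ _
      _ ≤ δ * ‖w‖ * ‖y‖ := by gcongr; exact h w (K.starProjection_apply_mem y)
  rcases (norm_nonneg w).eq_or_lt with hw | hw
  · rw [← hw]; positivity
  · nlinarith

theorem Submodule.norm_starProjection_sub_starProjection_le (T F : Submodule 𝕜 E)
    [T.HasOrthogonalProjection] [F.HasOrthogonalProjection] {δ : ℝ} (hδ : 0 ≤ δ)
    (hT : ∀ w ∈ T, ‖Fᗮ.starProjection w‖ ≤ δ * ‖w‖)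
    (hTorth : ∀ y ∈ Tᗮ, ‖F.starProjection y‖ ≤ δ * ‖y‖) :
    ‖T.starProjection - F.starProjection‖ ≤ δ := by
  refine ContinuousLinearMap.opNorm_le_bound _ hδ fun z => ?_
  set v := (T.starProjection - F.starProjection) z
  have hFF : F.starProjection (F.starProjection z) = F.starProjection z :=
    F.starProjection_eq_self_iff.mpr (F.starProjection_apply_mem z)
  have hperp : Fᗮ.starProjection v = Fᗮ.starProjection (T.starProjection z) := by
    simp [v, F.starProjection_orthogonal_val, hFF]
  have hpar : F.starProjection v = -F.starProjection (Tᗮ.starProjection z) := by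
    simp [v, T.starProjection_orthogonal_val, hFF]
  have hsq : ‖v‖ ^ 2 ≤ (δ * ‖z‖) ^ 2 :=
    calc ‖v‖ ^ 2 = ‖F.starProjection v‖ ^ 2 + ‖Fᗮ.starProjection v‖ ^ 2 :=
          F.norm_sq_eq_add_norm_sq_starProjection v
      _ ≤ (δ * ‖Tᗮ.starProjection z‖) ^ 2 + (δ * ‖T.starProjection z‖) ^ 2 := by
          rw [hpar, hperp, norm_neg]
          gcongr
          · exact hTorth _ (Tᗮ.starProjection_apply_mem z)
          · exact hT _ (T.starProjection_apply_mem z)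
      _ = δ ^ 2 * (‖T.starProjection z‖ ^ 2 + ‖Tᗮ.starProjection z‖ ^ 2) := by ring
      _ = (δ * ‖z‖) ^ 2 := by rw [← T.norm_sq_eq_add_norm_sq_starProjection z, mul_pow]
  exact (pow_le_pow_iff_left₀ (norm_nonneg _) (by positivity) two_ne_zero).mp hsq

end Projections

section TangentPlane

variable {n : ℕ} {F : Submodule ℝ (EuclideanSpace ℝ (Fin n))} {Du : F →L[ℝ] Fᗮ}

theorem pr_eq_starProjection (K : Submodule ℝ (EuclideanSpace ℝ (Fin n))) :
    pr K = K.starProjection :=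
  rfl

theorem orthogonalProjectionOnto_orthogonal_of_mem_tangentPlane {w : EuclideanSpace ℝ (Fin n)}
    (hw : w ∈ tangentPlane F Du) :
    Fᗮ.orthogonalProjectionOnto w = Du (F.orthogonalProjectionOnto w) := by
  obtain ⟨v, rfl⟩ := hw
  simp [Submodule.orthogonalProjectionOnto_orthogonal_apply_eq_zero v.2,
    Submodule.orthogonalProjectionOnto_apply_of_mem_orthogonal (Du v).2]

theorem norm_starProjection_orthogonal_le_of_mem_tangentPlane {w : EuclideanSpace ℝ (Fin n)}
    (hw : w ∈ tangentPlane F Du) : ‖Fᗮ.starProjection w‖ ≤ ‖Du‖ * ‖w‖ :=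
  calc ‖Fᗮ.starProjection w‖ = ‖Du (F.orthogonalProjectionOnto w)‖ := by
        rw [Fᗮ.starProjection_apply, Submodule.coe_norm,
          orthogonalProjectionOnto_orthogonal_of_mem_tangentPlane hw]
    _ ≤ ‖Du‖ * ‖F.orthogonalProjectionOnto w‖ := Du.le_opNorm _
    _ ≤ ‖Du‖ * ‖w‖ := by gcongr; exact F.norm_orthogonalProjectionOnto_apply_le w

theorem norm_starProjection_orthogonal_tangentPlane_le (w : F) :
    ‖(tangentPlane F Du)ᗮ.starProjection w‖ ≤ ‖Du‖ * ‖w‖ := by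
  set T := tangentPlane F Du
  have hgraph : (w : EuclideanSpace ℝ (Fin n)) + Du w ∈ T := LinearMap.mem_range_self _ w
  calc ‖Tᗮ.starProjection w‖ = ‖w - T.starProjection w‖ := by
        rw [T.starProjection_orthogonal_val]
    _ ≤ ‖w - (w + Du w : EuclideanSpace ℝ (Fin n))‖ := by
        rw [Submodule.starProjection_minimal]
        have hbdd : BddBelow (Set.range fun t : T => ‖(w : EuclideanSpace ℝ (Fin n)) - t‖) :=
          ⟨0, Set.forall_mem_range.2 fun _ => norm_nonneg _⟩
        exact ciInf_le hbdd ⟨_, hgraph⟩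
    _ = ‖Du w‖ := by rw [sub_add_cancel_left, norm_neg, Submodule.coe_norm]
    _ ≤ ‖Du‖ * ‖w‖ := Du.le_opNorm w

end TangentPlane

theorem angle_tangentPlane_le_general {n : ℕ} (β : ℝ) (hβ0 : 0 ≤ β)
    (F : Submodule ℝ (EuclideanSpace ℝ (Fin n)))
    (u : F → Fᗮ) (hu : ∀ a b : F, ‖u a - u b‖ ≤ β * ‖a - b‖)
    (x : F) (Du : F →L[ℝ] Fᗮ) (hDu : HasFDerivAt u Du x) :
    ‖pr (tangentPlane F Du) - pr F‖ ≤ ‖Du‖ ∧ ‖Du‖ ≤ β := by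
  refine ⟨?_, hDu.le_of_lip' hβ0 (Eventually.of_forall fun a => hu a x)⟩
  rw [pr_eq_starProjection, pr_eq_starProjection]
  exact Submodule.norm_starProjection_sub_starProjection_le _ _ (norm_nonneg Du)
    (fun _ => norm_starProjection_orthogonal_le_of_mem_tangentPlane)
    (fun _ => Submodule.norm_starProjection_le_of_norm_starProjection_le _ _ (norm_nonneg Du)
      fun w hw => norm_starProjection_orthogonal_tangentPlane_le ⟨w, hw⟩)

/-- Lemma B.1: if `u : F → F⊥` is `β`-Lipschitz, `β < 1`, and differentiable at
`x` with derivative `Du`, then `∠(T_p(graph u), F) ≤ ‖Du(x)‖ ≤ β`. -/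
theorem angle_tangentPlane_le {n m : ℕ} (β : ℝ) (hβ0 : 0 ≤ β) (hβ1 : β < 1)
    (F : Submodule ℝ (EuclideanSpace ℝ (Fin n))) (hF : Module.finrank ℝ F = m)
    (u : F → Fᗮ) (hu : ∀ a b : F, ‖u a - u b‖ ≤ β * ‖a - b‖)
    (x : F) (Du : F →L[ℝ] Fᗮ) (hDu : HasFDerivAt u Du x) :
    ‖pr (tangentPlane F Du) - pr F‖ ≤ ‖Du‖ ∧ ‖Du‖ ≤ β :=
  angle_tangentPlane_le_general β hβ0 F u hu x Du hDu
end

section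
/- Let F, G be m-dimensional subspaces of ℝ^n with principal angles θ_1 ≤ … ≤ θ_m, and define the combined angle θ ∈ [0, π/2] by cos θ := ∏_{i=1}^m cos θ_i. Then sin θ_m ≤ sin θ ≤ √m · sin θ_m. -/
open Metric Real Filter

/-! Since `cos θ` is a product of the cosines of the principal angles, each in `[0, 1]`,
it is at most each factor, which gives `sin θ_m ≤ sin θ`. Conversely
`1 - ∏ cᵢ² ≤ ∑ (1 - cᵢ²)` (the Weierstrass product inequality) gives
`sin² θ ≤ ∑ sin² θᵢ ≤ m sin² θ_m`. -/

namespace Finset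

variable {ι R : Type*} [CommRing R] [LinearOrder R] [IsStrictOrderedRing R] {s : Finset ι}
  {f : ι → R}

theorem prod_le_of_mem (h0 : ∀ i ∈ s, 0 ≤ f i) (h1 : ∀ i ∈ s, f i ≤ 1) {j : ι} (hj : j ∈ s) :
    ∏ i ∈ s, f i ≤ f j := by
  classical
  rw [← mul_prod_erase s f hj]
  exact mul_le_of_le_one_right (h0 j hj)
    (prod_le_one (fun i hi => h0 i (mem_of_mem_erase hi)) fun i hi => h1 i (mem_of_mem_erase hi))

theorem one_sub_prod_le_sum_one_sub (h0 : ∀ i ∈ s, 0 ≤ f i) (h1 : ∀ i ∈ s, f i ≤ 1) :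
    1 - ∏ i ∈ s, f i ≤ ∑ i ∈ s, (1 - f i) := by
  classical
  induction s using Finset.induction_on with
  | empty => simp
  | insert j s hj ih =>
    rw [prod_insert hj, sum_insert hj]
    have hs0 : ∀ i ∈ s, 0 ≤ f i := fun i hi => h0 i (mem_insert_of_mem hi)
    have hs1 : ∀ i ∈ s, f i ≤ 1 := fun i hi => h1 i (mem_insert_of_mem hi)
    have hfj : 0 ≤ 1 - f j := sub_nonneg.2 (h1 j (mem_insert_self j s))
    have hprod : 0 ≤ 1 - ∏ i ∈ s, f i := sub_nonneg.2 (prod_le_one hs0 hs1)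
    have := mul_nonneg hfj hprod
    linarith [ih hs0 hs1]

end Finset

namespace Real

open Set

variable {ι : Type*} [Fintype ι] {θ : ℝ} {φ : ι → ℝ}

theorem sin_le_sin_of_cos_eq_prod (hθ : θ ∈ Icc 0 (π / 2)) (hφ : ∀ i, φ i ∈ Icc 0 (π / 2))
    (hcos : cos θ = ∏ i, cos (φ i)) (j : ι) : sin (φ j) ≤ sin θ := by
  have hcos_nonneg : ∀ i, 0 ≤ cos (φ i) := fun i =>
    cos_nonneg_of_mem_Icc ⟨by linarith [(hφ i).1, pi_pos], (hφ i).2⟩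
  have hcos_le : cos θ ≤ cos (φ j) :=
    hcos ▸ Finset.prod_le_of_mem (fun i _ => hcos_nonneg i) (fun i _ => cos_le_one _)
      (Finset.mem_univ j)
  have hφθ : φ j ≤ θ :=
    (strictAntiOn_cos.le_iff_ge ⟨hθ.1, by linarith [hθ.2, pi_pos]⟩
      ⟨(hφ j).1, by linarith [(hφ j).2, pi_pos]⟩).1 hcos_le
  exact sin_le_sin_of_le_of_le_pi_div_two (by linarith [(hφ j).1, pi_pos]) hθ.2 hφθ

theorem sin_sq_le_sum_sin_sq_of_cos_eq_prod (hcos : cos θ = ∏ i, cos (φ i)) :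
    sin θ ^ 2 ≤ ∑ i, sin (φ i) ^ 2 := by
  have hcos_sq_le : ∀ i, cos (φ i) ^ 2 ≤ 1 := fun i => cos_sq_le_one _
  calc sin θ ^ 2 = 1 - ∏ i, cos (φ i) ^ 2 := by rw [sin_sq, hcos, Finset.prod_pow]
    _ ≤ ∑ i, (1 - cos (φ i) ^ 2) :=
      Finset.one_sub_prod_le_sum_one_sub (fun i _ => sq_nonneg _) fun i _ => hcos_sq_le i
    _ = ∑ i, sin (φ i) ^ 2 := by simp only [sin_sq]

end Real

theorem sin_combined_angle_bounds {m : ℕ} (hm : 1 ≤ m)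
    (θi : Fin m → ℝ) (hθmono : Monotone θi)
    (hθmem : ∀ i, θi i ∈ Set.Icc 0 (π / 2))
    (θ : ℝ) (hθ : θ ∈ Set.Icc 0 (π / 2))
    (hcos : Real.cos θ = ∏ i, Real.cos (θi i)) :
    Real.sin (θi ⟨m - 1, by omega⟩) ≤ Real.sin θ ∧
    Real.sin θ ≤ Real.sqrt m * Real.sin (θi ⟨m - 1, by omega⟩) := by
  set M : Fin m := ⟨m - 1, by omega⟩
  have hsin_nonneg : ∀ i, 0 ≤ sin (θi i) := fun i =>
    sin_nonneg_of_mem_Icc ⟨(hθmem i).1, by linarith [(hθmem i).2, pi_pos]⟩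
  have hsin_sq_le : ∀ i, sin (θi i) ^ 2 ≤ sin (θi M) ^ 2 := fun i =>
    pow_le_pow_left₀ (hsin_nonneg i) (sin_le_sin_of_le_of_le_pi_div_two
      (by linarith [(hθmem i).1, pi_pos]) (hθmem M).2
      (hθmono (Fin.le_def.2 (Nat.le_sub_one_of_lt i.isLt)))) 2
  refine ⟨sin_le_sin_of_cos_eq_prod hθ hθmem hcos M, ?_⟩
  have hsq : sin θ ^ 2 ≤ (√m * sin (θi M)) ^ 2 :=
    calc sin θ ^ 2 ≤ ∑ i, sin (θi i) ^ 2 := sin_sq_le_sum_sin_sq_of_cos_eq_prod hcos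
      _ ≤ m * sin (θi M) ^ 2 := by
        simpa using Finset.sum_le_card_nsmul Finset.univ _ _ fun i _ => hsin_sq_le i
      _ = (√m * sin (θi M)) ^ 2 := by rw [mul_pow, sq_sqrt (Nat.cast_nonneg m)]
  exact (le_abs_self _).trans
    (abs_le_of_sq_le_sq hsq (mul_nonneg (sqrt_nonneg _) (hsin_nonneg M)))
end
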